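/- Let q be a power of an odd prime p and let Ȧ be the q×q matrix over F_q whose rows are a_1 = w_1, …, a_{q−1} = w_{q−1}, a_q = w_q + ((p−1)/2) w_1, where w_i is the evaluation of X^{i−1} at all points of F_q. For i = 1,…,q, let C_i ⊆ F_q^m be a nonzero linear code of dimension k_i and minimum distance d_i such that C_{q−i+1}^{⊥E} ⊆ C_i for all i. Then the matrix-product code C = [C_1,…,C_q]·Ȧ is a Euclidean dual-containing linear code of length qm and dimension Σ_{i=1}^q k_i, with minimum distance d(C) ≥ min_{1 ≤ i ≤ q} d_i (q − i + 1). -/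

import Mathlib

/-- Minimum distance (minimum Hamming weight of a nonzero element) of a set of vectors. -/
noncomputable def dminS {F : Type*} [DecidableEq F] [Zero F] {n : Type*} [Fintype n]
    (C : Set (n → F)) : ℕ :=
  sInf { w | ∃ c ∈ C, c ≠ 0 ∧ hammingNorm c = w }

/-- Euclidean dual of a set of vectors. -/
def dualE {F : Type*} [Field F] {n : Type*} [Fintype n] (C : Set (n → F)) : Set (n → F) :=
  { x | ∀ c ∈ C, ∑ j, x j * c j = 0 }

/-- Hermitian dual (with respect to x ↦ x^q) of a set of vectors over F_{q^2}. -/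
def dualH {F : Type*} [Field F] {n : Type*} [Fintype n] (q : ℕ) (C : Set (n → F)) :
    Set (n → F) :=
  { x | ∀ c ∈ C, ∑ j, x j * (c j) ^ q = 0 }

/-- The matrix-product code `[C_1,…,C_s]·A` as a set of vectors indexed by `Fin h × Fin m`. -/
def mpcSet {F : Type*} [Field F] {s h m : ℕ}
    (C : Fin s → Set (Fin m → F)) (A : Matrix (Fin s) (Fin h) F) :
    Set (Fin h × Fin m → F) :=
  { p | ∃ v : Fin s → Fin m → F, (∀ i, v i ∈ C i) ∧ ∀ x, p x = ∑ i, A i x.1 * v i x.2 }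

/-- A matrix is non-singular by columns. -/
def IsNSC {F : Type*} [Field F] {s h : ℕ} (A : Matrix (Fin s) (Fin h) F) : Prop :=
  ∀ (i : ℕ) (hi : i ≤ s), 0 < i → ∀ c : Fin i → Fin h, StrictMono c →
    (Matrix.of fun r t : Fin i => A (Fin.castLE hi r) (c t)).det ≠ 0

/-- Punctured code: projection of `C` onto the coordinates in `R`. -/
def punct {F : Type*} {n : Type*} (C : Set (n → F)) (R : Finset n) :
    Set ({x // x ∈ R} → F) :=
  (fun c (t : {x // x ∈ R}) => c t.1) '' C

/-- `R` is an (r,δ)-extended recovery set for coordinate `i` of the code `C`. -/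
def IsRecSet {F : Type*} [DecidableEq F] [Zero F] {n : Type*} [Fintype n]
    (C : Set (n → F)) (r δ : ℕ) (i : n) (R : Finset n) : Prop :=
  i ∈ R ∧ R.card ≤ r + δ - 1 ∧ δ ≤ dminS (punct C R)

/-- `C` is a locally recoverable code with locality (r,δ). -/
def IsLRC {F : Type*} [DecidableEq F] [Zero F] {n : Type*} [Fintype n]
    (C : Set (n → F)) (r δ : ℕ) : Prop :=
  ∀ i : n, ∃ R : Finset n, IsRecSet C r δ i R

/-- `wv α i` is the evaluation of the monomial `X^(i-1)` at all points of the field,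
enumerated by `α`. -/
def wv {F : Type*} [Field F] {q : ℕ} (α : Fin q ≃ F) (i : ℕ) : Fin q → F :=
  fun j => (α j) ^ (i - 1)

/-- `av α p i` : the vectors `a_i`, with `a_i = w_i` for `i < q` and
`a_q = w_q + ((p-1)/2) • w_1`. -/
def av {F : Type*} [Field F] {q : ℕ} (α : Fin q ≃ F) (p : ℕ) (i : ℕ) : Fin q → F :=
  if i = q then wv α q + (((p - 1) / 2 : ℕ) : F) • wv α 1 else wv α i

/-- The square matrix whose rows are `a_1, …, a_q`. -/
def Adot {F : Type*} [Field F] {q : ℕ} (α : Fin q ≃ F) (p : ℕ) : Matrix (Fin q) (Fin q) F :=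
  Matrix.of fun r j => av α p ((r : ℕ) + 1) j

/-!
Over `F_q` the power sum `∑ₓ xᵏ` is `-1` when `k` is a positive multiple of `q - 1` and `0`
otherwise. Hence the rows of `Ȧ` satisfy `Ȧ Ȧᵀ = -J`, `J` the reversal permutation matrix:
the shift of `a_q` by `(p-1)/2 = -1/2` is exactly what makes `a_q` self-orthogonal. So
`Ȧᵀ J Ȧ = -1`, and a vector `x` orthogonal to the code is recovered as `x = Ȧᵀ u` with
`u = -J Ȧ x`, whose `i`-th block lies in `C_{q-i+1}^⊥ ⊆ C_i`.

For the distance, let `ℓ` be the last index with `v_ℓ ≠ 0`. Every column `t` of the codeword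
with `v_ℓ(t) ≠ 0` is the evaluation on all of `F_q` of a nonzero polynomial of degree `< ℓ`
(if `ℓ < q`, since the first `q - 1` rows of `Ȧ` are Vandermonde rows), or a nonzero vector
(if `ℓ = q`, since `Ȧ` is invertible); either way it has at least `q - ℓ + 1` nonzero entries.
-/

open Finset
open scoped Matrix

section PowerSums
variable {K : Type*} [Field K] [Fintype K]

theorem FiniteField.sum_pow_eq_ite (k : ℕ) :
    ∑ x : K, x ^ k = if k ≠ 0 ∧ Fintype.card K - 1 ∣ k then -1 else 0 := by
  classical
  rcases eq_or_ne k 0 with rfl | hk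
  · simp
  have hunits : ∑ x : K, x ^ k = ∑ u : Kˣ, (u : K) ^ k := by
    rw [← Fintype.sum_subtype_add_sum_subtype (fun x : K => x ≠ 0),
      Fintype.sum_eq_zero (fun x : {x : K // ¬x ≠ 0} => (x : K) ^ k)
        (fun x => by simp [not_not.mp x.2, hk]), add_zero]
    exact (Fintype.sum_equiv unitsEquivNeZero _ _ fun _ => rfl).symm
  rw [hunits, FiniteField.sum_pow_units]
  simp [hk]

theorem FiniteField.sum_pow_of_le_two_mul {k : ℕ} (hk : k ≤ 2 * (Fintype.card K - 1)) :
    ∑ x : K, x ^ k =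
      if k = Fintype.card K - 1 ∨ k = 2 * (Fintype.card K - 1) then -1 else 0 := by
  have hq : 1 < Fintype.card K := Fintype.one_lt_card
  rw [FiniteField.sum_pow_eq_ite]
  refine if_congr ⟨?_, ?_⟩ rfl rfl
  · rintro ⟨hk0, c, rfl⟩
    have : c ≤ 2 := le_of_mul_le_mul_left (by linarith) (by omega : 0 < Fintype.card K - 1)
    interval_cases c <;> omega
  · rintro (rfl | rfl) <;> exact ⟨by omega, by simp⟩

theorem sum_pow_add_ite_mul_pow_add_ite {c : K} (hc : 2 * c = -1) {r r' : ℕ}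
    (hr : r < Fintype.card K) (hr' : r' < Fintype.card K) :
    ∑ x : K, (x ^ r + if r = Fintype.card K - 1 then c else 0) *
        (x ^ r' + if r' = Fintype.card K - 1 then c else 0) =
      if r + r' = Fintype.card K - 1 then -1 else 0 := by
  set a : K := if r = Fintype.card K - 1 then c else 0
  set b : K := if r' = Fintype.card K - 1 then c else 0
  -- `x ^ 0` makes the constant term a power sum too (it vanishes, being `q • (a * b)`).
  have hexpand : ∀ x : K, (x ^ r + a) * (x ^ r' + b) =
      x ^ (r + r') + b * x ^ r + a * x ^ r' + a * b * x ^ 0 := fun x => by ring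
  simp only [hexpand, sum_add_distrib, ← mul_sum]
  rw [FiniteField.sum_pow_of_le_two_mul (by omega), FiniteField.sum_pow_of_le_two_mul (by omega),
    FiniteField.sum_pow_of_le_two_mul (by omega), FiniteField.sum_pow_of_le_two_mul (by omega)]
  have hq : 1 < Fintype.card K := Fintype.one_lt_card
  simp only [a, b]
  split_ifs <;> first | omega | ring1 | linear_combination hc | linear_combination -hc

end PowerSums

theorem Adot_apply {F : Type*} [Field F] {q : ℕ} (α : Fin q ≃ F) (p : ℕ) (r j : Fin q) :
    Adot α p r j =
      α j ^ (r : ℕ) + if (r : ℕ) = q - 1 then (((p - 1) / 2 : ℕ) : F) else 0 := by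
  have := r.2
  by_cases h : (r : ℕ) = q - 1
  · simp [Adot, av, wv, h, show q - 1 + 1 = q by omega]
  · simp [Adot, av, wv, h, show (r : ℕ) + 1 ≠ q by omega]

open Matrix in
theorem Adot_mul_transpose {F : Type*} [Field F] [Fintype F] {q : ℕ} (α : Fin q ≃ F) {p : ℕ}
    (hc : 2 * (((p - 1) / 2 : ℕ) : F) = -1) :
    Adot α p * (Adot α p)ᵀ = -(Fin.revPerm.permMatrix F) := by
  have hq : Fintype.card F = q := by simpa using (Fintype.card_congr α).symm
  subst hq
  ext r r'
  have hrev : (r : ℕ) + r' = Fintype.card F - 1 ↔ r.rev = r' := by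
    rw [Fin.ext_iff, Fin.val_rev]; omega
  trans if (r : ℕ) + r' = Fintype.card F - 1 then -1 else 0
  · simp only [mul_apply, transpose_apply, Adot_apply]
    exact (Equiv.sum_comp α _).trans (sum_pow_add_ite_mul_pow_add_ite hc r.2 r'.2)
  · simp [PEquiv.toMatrix_apply, hrev, apply_ite]

theorem Matrix.transpose_mul_mul_eq_neg_one {n R : Type*} [Fintype n] [DecidableEq n] [CommRing R]
    {A P : Matrix n n R} (hP : P * P = 1) (hA : A * Aᵀ = -P) : Aᵀ * (P * A) = -1 := by
  have h : A * -(Aᵀ * P) = 1 := by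
    rw [Matrix.mul_neg, ← Matrix.mul_assoc, hA, neg_mul, hP, neg_neg]
  rw [← neg_eq_iff_eq_neg, ← Matrix.mul_assoc, ← neg_mul, mul_eq_one_comm.mp h]

theorem permMatrix_revPerm_mul_self (R : Type*) [Semiring R] (q : ℕ) :
    Fin.revPerm.permMatrix R * Fin.revPerm.permMatrix R = (1 : Matrix (Fin q) (Fin q) R) := by
  rw [← Matrix.permMatrix_mul, show Fin.revPerm * Fin.revPerm = 1 from Equiv.ext Fin.rev_rev,
    Matrix.permMatrix_one]

def Submodule.piUnivEquiv {R ι : Type*} [Semiring R] {φ : ι → Type*}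
    [∀ i, AddCommMonoid (φ i)] [∀ i, Module R (φ i)] (p : ∀ i, Submodule R (φ i)) :
    Submodule.pi Set.univ p ≃ₗ[R] Π i, p i where
  toFun x i := ⟨x.1 i, x.2 i trivial⟩
  map_add' _ _ := rfl
  map_smul' _ _ := rfl
  invFun y := ⟨fun i => y i, fun i _ => (y i).2⟩
  left_inv _ := rfl
  right_inv _ := rfl

theorem Submodule.finrank_pi_univ {R ι : Type*} [Ring R] [StrongRankCondition R] [Fintype ι]
    {φ : ι → Type*} [∀ i, AddCommGroup (φ i)] [∀ i, Module R (φ i)]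
    (p : ∀ i, Submodule R (φ i)) [∀ i, Module.Free R (p i)] [∀ i, Module.Finite R (p i)] :
    Module.finrank R (Submodule.pi Set.univ p) = ∑ i, Module.finrank R (p i) :=
  (Submodule.piUnivEquiv p).finrank_eq.trans (Module.finrank_pi_fintype R)

section MatrixProductCode
variable {F : Type*} [Field F] {s h m : ℕ}

def mpcMap (A : Matrix (Fin s) (Fin h) F) :
    (Fin s → Fin m → F) →ₗ[F] (Fin h × Fin m → F) where
  toFun v x := ∑ i, A i x.1 * v i x.2
  map_add' u v := by ext x; simp [mul_add, sum_add_distrib]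
  map_smul' c v := by ext x; simp [mul_sum, mul_left_comm]

def mpcAdj (A : Matrix (Fin s) (Fin h) F) (x : Fin h × Fin m → F) : Fin s → Fin m → F :=
  fun i t => ∑ j, A i j * x (j, t)

theorem mpcMap_apply (A : Matrix (Fin s) (Fin h) F) (v : Fin s → Fin m → F)
    (x : Fin h × Fin m) : mpcMap A v x = ∑ i, A i x.1 * v i x.2 :=
  rfl

theorem mpcMap_apply_eq_vecMul (A : Matrix (Fin s) (Fin h) F) (v : Fin s → Fin m → F)
    (j : Fin h) (t : Fin m) : mpcMap A v (j, t) = ((fun i => v i t) ᵥ* A) j := by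
  simp [mpcMap_apply, Matrix.vecMul, dotProduct, mul_comm]

theorem coe_map_mpcMap_pi (C : Fin s → Submodule F (Fin m → F)) (A : Matrix (Fin s) (Fin h) F) :
    (Submodule.map (mpcMap A) (Submodule.pi Set.univ C) : Set (Fin h × Fin m → F)) =
      mpcSet (fun i => (C i : Set (Fin m → F))) A := by
  ext x
  simp only [Submodule.map_coe, Set.mem_image, SetLike.mem_coe, Submodule.mem_pi, Set.mem_univ,
    true_implies, mpcSet, Set.mem_ofPred_eq, funext_iff, mpcMap_apply, eq_comm]

theorem sum_mul_mpcMap (A : Matrix (Fin s) (Fin h) F) (x : Fin h × Fin m → F)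
    (v : Fin s → Fin m → F) :
    ∑ z, x z * mpcMap A v z = ∑ i, ∑ t, mpcAdj A x i t * v i t := by
  simp only [mpcMap_apply, mpcAdj, mul_sum, sum_mul]
  rw [sum_comm]
  refine sum_congr rfl fun i _ => ?_
  rw [Fintype.sum_prod_type_right]
  exact sum_congr rfl fun t _ => sum_congr rfl fun j _ => by ring

theorem mpcMap_mpcAdj_of_transpose_mul_eq_one {A : Matrix (Fin s) (Fin h) F}
    {B : Matrix (Fin s) (Fin h) F} (hAB : Aᵀ * B = 1) (x : Fin h × Fin m → F) :
    mpcMap A (mpcAdj B x) = x := by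
  ext ⟨j, t⟩
  calc mpcMap A (mpcAdj B x) (j, t) = ∑ y, (Aᵀ * B) j y * x (y, t) := by
        simp only [mpcMap_apply, mpcAdj, Matrix.mul_apply, Matrix.transpose_apply, mul_sum,
          sum_mul, mul_assoc]
        exact sum_comm
    _ = x (j, t) := by simp [hAB, Matrix.one_apply]

theorem mpcMap_injective {A : Matrix (Fin s) (Fin s) F} (hA : IsUnit A) :
    Function.Injective (mpcMap (m := m) A) := by
  intro u v huv
  ext i t
  refine congrFun (Matrix.vecMul_injective_iff_isUnit.mpr hA (a₁ := fun i => u i t)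
    (a₂ := fun i => v i t) (funext fun j => ?_)) i
  simpa only [mpcMap_apply_eq_vecMul] using congrFun huv (j, t)

end MatrixProductCode

section Dual
variable {F : Type*} [Field F] {q m : ℕ}

theorem dualE_map_mpcMap_pi_subset {A : Matrix (Fin q) (Fin q) F}
    (hA : Aᵀ * (Fin.revPerm.permMatrix F * A) = -1) (C : Fin q → Submodule F (Fin m → F))
    (hdual : ∀ i, dualE (C (Fin.rev i) : Set (Fin m → F)) ⊆ C i) :
    dualE (Submodule.map (mpcMap A) (Submodule.pi Set.univ C) : Set (Fin q × Fin m → F)) ⊆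
      Submodule.map (mpcMap A) (Submodule.pi Set.univ C) := by
  intro x hx
  have hadj : ∀ i, mpcAdj A x i ∈ dualE (C i : Set (Fin m → F)) := by
    intro i w hw
    have hsingle : Pi.single i w ∈ Submodule.pi Set.univ C := Submodule.le_comap_single_pi C hw
    simpa [sum_mul_mpcMap, Pi.single_apply, ite_apply] using hx _ (Submodule.mem_map_of_mem hsingle)
  refine ⟨mpcAdj (-(Fin.revPerm.permMatrix F * A)) x, fun i _ => ?_,
    mpcMap_mpcAdj_of_transpose_mul_eq_one (by rw [Matrix.mul_neg, hA, neg_neg]) x⟩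
  have hrev : mpcAdj (-(Fin.revPerm.permMatrix F * A)) x i = -mpcAdj A x (Fin.rev i) := by
    ext t
    simp [mpcAdj, PEquiv.toMatrix_toPEquiv_mul]
  rw [hrev]
  exact (C i).neg_mem (hdual i (hadj _))

end Dual

theorem finrank_map_mpcMap_pi {F : Type*} [Field F] {s m : ℕ} {A : Matrix (Fin s) (Fin s) F}
    (hA : IsUnit A) (C : Fin s → Submodule F (Fin m → F)) :
    Module.finrank F (Submodule.map (mpcMap A) (Submodule.pi Set.univ C)) =
      ∑ i, Module.finrank F (C i) :=
  (Submodule.equivMapOfInjective _ (mpcMap_injective hA) _).finrank_eq.symm.trans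
    (Submodule.finrank_pi_univ C)

section Weight
variable {F : Type*} [Field F] [DecidableEq F] {s h m : ℕ}

theorem hammingNorm_mpcMap (A : Matrix (Fin s) (Fin h) F) (v : Fin s → Fin m → F) :
    hammingNorm (mpcMap A v) = ∑ t, hammingNorm ((fun i => v i t) ᵥ* A) := by
  simp only [hammingNorm, card_filter, Fintype.sum_prod_type_right, mpcMap_apply_eq_vecMul]

theorem mul_le_hammingNorm_mpcMap {A : Matrix (Fin s) (Fin h) F} {b : ℕ} {ℓ : Fin s}
    (hcol : ∀ w : Fin s → F, w ℓ ≠ 0 → (∀ i, ℓ < i → w i = 0) →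
      b ≤ hammingNorm (w ᵥ* A))
    {v : Fin s → Fin m → F} (hv : ∀ i, ℓ < i → v i = 0) :
    hammingNorm (v ℓ) * b ≤ hammingNorm (mpcMap A v) := by
  rw [hammingNorm_mpcMap]
  calc hammingNorm (v ℓ) * b = ∑ t ∈ univ.filter (fun t => v ℓ t ≠ 0), b := by
        rw [sum_const, smul_eq_mul]; rfl
    _ ≤ ∑ t ∈ univ.filter (fun t => v ℓ t ≠ 0), hammingNorm ((fun i => v i t) ᵥ* A) :=
        sum_le_sum fun t ht => hcol _ (mem_filter.1 ht).2 fun i hi => by simp [hv i hi]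
    _ ≤ ∑ t, hammingNorm ((fun i => v i t) ᵥ* A) := sum_le_sum_of_subset (subset_univ _)

open Polynomial in
theorem card_sub_natDegree_le_hammingNorm_eval {ι : Type*} [Fintype ι] {α : ι → F}
    (hα : Function.Injective α) {Q : F[X]} (hQ : Q ≠ 0) :
    Fintype.card ι - Q.natDegree ≤ hammingNorm (fun j => Q.eval (α j)) := by
  have hroots : #(univ.filter fun j => Q.eval (α j) = 0) ≤ Q.natDegree := by
    rw [← card_image_of_injective _ hα]
    refine card_le_degree_of_subset_roots fun x hx => ?_
    obtain ⟨j, hj, rfl⟩ := mem_image.1 hx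
    exact (mem_roots hQ).2 (mem_filter.1 hj).2
  have hsplit := card_filter_add_card_filter_not (s := univ) (fun j => Q.eval (α j) = 0)
  rw [card_univ] at hsplit
  simp only [hammingNorm, ne_eq]
  omega

open Polynomial in
theorem card_sub_le_hammingNorm_sum_mul_pow {ι : Type*} [Fintype ι] {α : ι → F}
    (hα : Function.Injective α) {n : ℕ} {w : Fin n → F} {ℓ : Fin n} (hwℓ : w ℓ ≠ 0)
    (hw : ∀ i, ℓ < i → w i = 0) :
    Fintype.card ι - ℓ ≤ hammingNorm (fun j => ∑ i, w i * α j ^ (i : ℕ)) := by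
  set Q : F[X] := ∑ i, C (w i) * X ^ (i : ℕ)
  have hdeg : Q.natDegree ≤ ℓ := by
    refine natDegree_sum_le_of_forall_le _ _ fun i _ => ?_
    rcases le_or_gt i ℓ with hi | hi
    · exact (natDegree_C_mul_X_pow_le _ _).trans hi
    · simp [hw i hi]
  have hcoeff : Q.coeff ℓ = w ℓ := by
    simp [Q, Fin.val_inj]
  have hQ : Q ≠ 0 := fun h => hwℓ (by rw [← hcoeff, h, coeff_zero])
  have heval : (fun j => ∑ i, w i * α j ^ (i : ℕ)) = fun j => Q.eval (α j) := by
    ext j; simp [Q, eval_finsetSum]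
  rw [heval]
  exact (Nat.sub_le_sub_left hdeg _).trans (card_sub_natDegree_le_hammingNorm_eval hα hQ)

end Weight

section Adot
variable {F : Type*} [Field F] [Fintype F] {q : ℕ} (α : Fin q ≃ F) {p : ℕ}

theorem transpose_Adot_mul_revPerm_mul_Adot (hc : 2 * (((p - 1) / 2 : ℕ) : F) = -1) :
    (Adot α p)ᵀ * (Fin.revPerm.permMatrix F * Adot α p) = -1 :=
  Matrix.transpose_mul_mul_eq_neg_one (permMatrix_revPerm_mul_self F q) (Adot_mul_transpose α hc)

theorem isUnit_Adot (hc : 2 * (((p - 1) / 2 : ℕ) : F) = -1) : IsUnit (Adot α p) := by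
  refine (Matrix.isUnit_iff_isUnit_det _).2 (Matrix.isUnit_det_of_left_inverse
    (B := -((Adot α p)ᵀ * Fin.revPerm.permMatrix F)) ?_)
  rw [neg_mul, Matrix.mul_assoc, transpose_Adot_mul_revPerm_mul_Adot α hc, neg_neg]

theorem sub_le_hammingNorm_vecMul_Adot [DecidableEq F] (hc : 2 * (((p - 1) / 2 : ℕ) : F) = -1)
    {w : Fin q → F} {ℓ : Fin q} (hwℓ : w ℓ ≠ 0) (hw : ∀ i, ℓ < i → w i = 0) :
    q - ℓ ≤ hammingNorm (w ᵥ* Adot α p) := by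
  rcases eq_or_ne (ℓ : ℕ) (q - 1) with hℓ | hℓ
  · have hw0 : w ≠ 0 := fun h => hwℓ (by simp [h])
    have : w ᵥ* Adot α p ≠ 0 := by
      rwa [Ne, ← Matrix.zero_vecMul (Adot α p),
        (Matrix.vecMul_injective_iff_isUnit.2 (isUnit_Adot α hc)).eq_iff]
    have := hammingNorm_pos_iff.2 this
    omega
  · have hrow : w ᵥ* Adot α p = fun j => ∑ i, w i * α j ^ (i : ℕ) := by
      ext j
      show ∑ i, w i * Adot α p i j = _
      refine sum_congr rfl fun i _ => ?_
      rcases le_or_gt i ℓ with hi | hi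
      · rw [Adot_apply, if_neg (by omega), add_zero]
      · simp [hw i hi]
    simpa [hrow] using card_sub_le_hammingNorm_sum_mul_pow α.injective hwℓ hw

end Adot

section MinimumDistance
variable {F : Type*} [Field F] [DecidableEq F]

theorem dminS_le_hammingNorm {n : Type*} [Fintype n] {C : Set (n → F)} {c : n → F}
    (hc : c ∈ C) (hc0 : c ≠ 0) : dminS C ≤ hammingNorm c :=
  Nat.sInf_le ⟨c, hc, hc0, rfl⟩

theorem le_dminS {n : Type*} [Fintype n] {C : Set (n → F)} {b : ℕ} (hC : ∃ c ∈ C, c ≠ 0)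
    (h : ∀ c ∈ C, c ≠ 0 → b ≤ hammingNorm c) : b ≤ dminS C := by
  obtain ⟨c, hc, hc0⟩ := hC
  exact le_csInf ⟨_, c, hc, hc0, rfl⟩ fun _ ⟨c, hc, hc0, hw⟩ => hw ▸ h c hc hc0

theorem Fin.exists_last_ne_zero {M : Type*} [Zero M] {s : ℕ} {v : Fin s → M} (hv : v ≠ 0) :
    ∃ ℓ, v ℓ ≠ 0 ∧ ∀ i, ℓ < i → v i = 0 := by
  classical
  obtain ⟨i₀, hi₀⟩ := Function.ne_iff.1 hv
  obtain ⟨ℓ, hℓ, hmax⟩ :=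
    (univ.filter fun i => v i ≠ 0).exists_max_image id ⟨i₀, by simpa using hi₀⟩
  refine ⟨ℓ, (mem_filter.1 hℓ).2, fun i hi => ?_⟩
  by_contra h
  exact (hmax i (by simpa using h)).not_gt hi

theorem le_dminS_map_mpcMap_pi {s m : ℕ} {A : Matrix (Fin s) (Fin s) F} (hA : IsUnit A)
    {b : Fin s → ℕ}
    (hcol : ∀ ℓ (w : Fin s → F), w ℓ ≠ 0 → (∀ i, ℓ < i → w i = 0) →
      b ℓ ≤ hammingNorm (w ᵥ* A))
    (C : Fin s → Submodule F (Fin m → F)) (hC : ∃ i, C i ≠ ⊥) :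
    sInf {v | ∃ i, v = dminS (C i : Set (Fin m → F)) * b i} ≤
      dminS (Submodule.map (mpcMap A) (Submodule.pi Set.univ C) : Set (Fin s × Fin m → F)) := by
  have hinj := mpcMap_injective (m := m) hA
  apply le_dminS
  · obtain ⟨i₀, hi₀⟩ := hC
    obtain ⟨w, hw, hw0⟩ := Submodule.exists_mem_ne_zero_of_ne_bot hi₀
    refine ⟨mpcMap A (Pi.single i₀ w),
      Submodule.mem_map_of_mem (Submodule.le_comap_single_pi C hw), fun h => hw0 ?_⟩
    simpa using hinj (h.trans (map_zero _).symm)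
  · rintro _ ⟨v, hv, rfl⟩ hc0
    obtain ⟨ℓ, hvℓ, hlast⟩ := Fin.exists_last_ne_zero fun h : v = 0 => hc0 (by simp [h])
    calc sInf {v | ∃ i, v = dminS (C i : Set (Fin m → F)) * b i}
        ≤ dminS (C ℓ : Set (Fin m → F)) * b ℓ := Nat.sInf_le ⟨ℓ, rfl⟩
      _ ≤ hammingNorm (v ℓ) * b ℓ :=
          Nat.mul_le_mul_right _ (dminS_le_hammingNorm (hv ℓ trivial) hvℓ)
      _ ≤ hammingNorm (mpcMap A v) := mul_le_hammingNorm_mpcMap (hcol ℓ) hlast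

end MinimumDistance

theorem two_mul_cast_half_pred_eq_neg_one {F : Type*} [Field F] {p : ℕ} (hp : p.Prime)
    (hodd : p ≠ 2) (hpF : (p : F) = 0) : 2 * (((p - 1) / 2 : ℕ) : F) = -1 := by
  have h2 : 2 * ((p - 1) / 2) = p - 1 :=
    Nat.mul_div_cancel' (Nat.Odd.sub_odd (hp.odd_of_ne_two hodd) odd_one).two_dvd
  rw [← Nat.cast_ofNat, ← Nat.cast_mul, h2, Nat.cast_sub hp.one_le, hpF]
  simp

theorem stmt10_general {F : Type*} [Field F] [Fintype F] [DecidableEq F] {p n q m : ℕ}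
    (hp : p.Prime) (hodd : p ≠ 2) (hq : q = p ^ n)
    (hcard : Fintype.card F = q)
    (α : Fin q ≃ F)
    (C : Fin q → Submodule F (Fin m → F)) (k d : Fin q → ℕ)
    (hnz : ∀ i, C i ≠ ⊥)
    (hk : ∀ i, Module.finrank F (C i) = k i)
    (hd : ∀ i, dminS ((C i : Set (Fin m → F))) = d i)
    (hdual : ∀ i : Fin q, dualE ((C (Fin.rev i) : Set (Fin m → F))) ⊆ (C i : Set (Fin m → F))) :
    ∃ S : Submodule F (Fin q × Fin m → F),
      (S : Set (Fin q × Fin m → F)) = mpcSet (fun i => (C i : Set (Fin m → F))) (Adot α p) ∧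
      dualE (S : Set (Fin q × Fin m → F)) ⊆ (S : Set (Fin q × Fin m → F)) ∧
      Module.finrank F S = ∑ i, k i ∧
      sInf { v | ∃ i : Fin q, v = d i * (q - (i : ℕ)) } ≤
        dminS ((S : Set (Fin q × Fin m → F))) := by
  have hpF : (p : F) = 0 := eq_zero_of_pow_eq_zero (n := n) (by
    rw [← Nat.cast_pow, ← hq, ← hcard, FiniteField.cast_card_eq_zero])
  have hc := two_mul_cast_half_pred_eq_neg_one hp hodd hpF
  refine ⟨_, coe_map_mpcMap_pi C (Adot α p),
    dualE_map_mpcMap_pi_subset (transpose_Adot_mul_revPerm_mul_Adot α hc) C hdual, ?_, ?_⟩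
  · rw [finrank_map_mpcMap_pi (isUnit_Adot α hc) C]
    simp only [hk]
  · simpa only [hd] using le_dminS_map_mpcMap_pi (isUnit_Adot α hc)
      (fun ℓ _ => sub_le_hammingNorm_vecMul_Adot α hc) C ⟨α.symm 0, hnz _⟩

/-- if `C_{q-i+1}^{⊥E} ⊆ C_i` for all `i`, then the matrix-product code
`[C_1,…,C_q]·Ȧ` is Euclidean dual-containing, of length `qm`, dimension `Σ k_i` and
minimum distance at least `min_i d_i (q - i + 1)`. -/
theorem stmt10 {F : Type*} [Field F] [Fintype F] [DecidableEq F] {p n q m : ℕ}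
    (hp : p.Prime) (hodd : p ≠ 2) (hn : 0 < n) (hq : q = p ^ n)
    (hcard : Fintype.card F = q) (hqpos : 0 < q)
    (α : Fin q ≃ F) (h0 : α ⟨0, hqpos⟩ = 0)
    (C : Fin q → Submodule F (Fin m → F)) (k d : Fin q → ℕ)
    (hnz : ∀ i, C i ≠ ⊥)
    (hk : ∀ i, Module.finrank F (C i) = k i)
    (hd : ∀ i, dminS ((C i : Set (Fin m → F))) = d i)
    (hdual : ∀ i : Fin q, dualE ((C (Fin.rev i) : Set (Fin m → F))) ⊆ (C i : Set (Fin m → F))) :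
    ∃ S : Submodule F (Fin q × Fin m → F),
      (S : Set (Fin q × Fin m → F)) = mpcSet (fun i => (C i : Set (Fin m → F))) (Adot α p) ∧
      dualE (S : Set (Fin q × Fin m → F)) ⊆ (S : Set (Fin q × Fin m → F)) ∧
      Module.finrank F S = ∑ i, k i ∧
      sInf { v | ∃ i : Fin q, v = d i * (q - (i : ℕ)) } ≤
        dminS ((S : Set (Fin q × Fin m → F))) :=
  stmt10_general hp hodd hq hcard α C k d hnz hk hd hdual
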